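/- arXiv:1304.5999 — 3 statements merged into one kernel-verified Lean document; each statement's English description precedes it below -/
import Mathlib

section
/- Let $\mathscr{D}$ be the standard dyadic grid in $\mathbb{R}^n$, let $\sigma_1,\dots,\sigma_m$ be weights (nonnegative locally integrable functions), and let $1<p_1,\dots,p_m<\infty$ with $\frac1p=\frac1{p_1}+\dots+\frac1{p_m}$ and $p\in(1,\infty)$. Suppose the nonnegative numbers $\{a_Q\}_{Q\in\mathscr{D}}$ satisfy the Carleson condition $\sum_{Q\subset R} a_Q \le A\int_R \prod_{i=1}^m \sigma_i^{p/p_i}\,dx$ for every $R\in\mathscr{D}$. Then for all nonnegative $f_i\in L^{p_i}(\sigma_i)$, $\Big(\sum_{Q\in\mathscr{D}} a_Q \prod_{i=1}^m\Big(\frac{1}{\sigma_i(Q)}\int_Q f_i\sigma_i\Big)^p\Big)^{1/p} \le A^{1/p}\,\|\mathcal{M}^d_{\vec\sigma}(\vec f)\|_{L^p(\prod_i\sigma_i^{p/p_i})}$, where $\mathcal{M}^d_{\vec\sigma}(\vec f)(x)=\sup_{Q\ni x,\,Q\in\mathscr{D}}\prod_{i=1}^m\frac{1}{\sigma_i(Q)}\int_Q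 |f_i|\sigma_i$. -/
open MeasureTheory ENNReal

noncomputable section

/-- Points of `ℝⁿ`. -/
abbrev Rn (n : ℕ) := Fin n → ℝ

/-- The half-open cube with corner `c` and sidelength `h`. -/
def cube {n : ℕ} (c : Rn n) (h : ℝ) : Set (Rn n) :=
  Set.univ.pi fun i => Set.Ico (c i) (c i + h)

/-- `Q` is a (half-open, axis-parallel) cube. -/
def IsCube {n : ℕ} (Q : Set (Rn n)) : Prop := ∃ c h, 0 < h ∧ Q = cube c h

/-- The dyadic cube `2^{-k}([0,1)^n + j)` of the standard dyadic grid. -/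
def dyadicCube {n : ℕ} (k : ℤ) (j : Fin n → ℤ) : Set (Rn n) :=
  cube (fun i => (j i : ℝ) * (2:ℝ) ^ (-k)) ((2:ℝ) ^ (-k))

/-- `Q` belongs to the standard dyadic grid `𝒟`. -/
def IsDyadicCube {n : ℕ} (Q : Set (Rn n)) : Prop := ∃ k j, Q = dyadicCube k j

/-- `∫_Q g` of a (nonnegative) real function, as an element of `ℝ≥0∞`. -/
def setInt {n : ℕ} (Q : Set (Rn n)) (g : Rn n → ℝ) : ℝ≥0∞ :=
  ∫⁻ x in Q, ENNReal.ofReal (g x)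

/-- The average `(1/|Q|)∫_Q g`. -/
def avg {n : ℕ} (Q : Set (Rn n)) (g : Rn n → ℝ) : ℝ≥0∞ := setInt Q g / volume Q

/-- The weighted average `(1/σ(Q)) ∫_Q f σ`. -/
def wAvg {n : ℕ} (Q : Set (Rn n)) (σ f : Rn n → ℝ) : ℝ≥0∞ :=
  setInt Q (fun x => f x * σ x) / setInt Q σ

/-- The dyadic weighted multisublinear maximal operator `𝓜^d_{⃗σ}`. -/
def Mdw {n m : ℕ} (σ f : Fin m → Rn n → ℝ) (x : Rn n) : ℝ≥0∞ :=
  ⨆ (Q : Set (Rn n)) (_ : IsDyadicCube Q) (_ : x ∈ Q), ∏ i, wAvg Q (σ i) (f i)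

/-- The dyadic weighted maximal operator `M^d_σ`. -/
def Mdw1 {n : ℕ} (σ f : Rn n → ℝ) (x : Rn n) : ℝ≥0∞ :=
  ⨆ (Q : Set (Rn n)) (_ : IsDyadicCube Q) (_ : x ∈ Q), wAvg Q σ f

/-- The multisublinear maximal operator `𝓜` over all cubes. -/
def MM {n m : ℕ} (f : Fin m → Rn n → ℝ) (x : Rn n) : ℝ≥0∞ :=
  ⨆ (Q : Set (Rn n)) (_ : IsCube Q) (_ : x ∈ Q), ∏ i, avg Q (f i)

/-- The dyadic multisublinear maximal operator `𝓜^d`. -/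
def MMd {n m : ℕ} (f : Fin m → Rn n → ℝ) (x : Rn n) : ℝ≥0∞ :=
  ⨆ (Q : Set (Rn n)) (_ : IsDyadicCube Q) (_ : x ∈ Q), ∏ i, avg Q (f i)

/-- The Hardy–Littlewood maximal operator (over all cubes). -/
def HLM {n : ℕ} (g : Rn n → ℝ) (x : Rn n) : ℝ≥0∞ :=
  ⨆ (Q : Set (Rn n)) (_ : IsCube Q) (_ : x ∈ Q), avg Q g

/-- `(∫ g^p v dx)^{1/p}` for an `ℝ≥0∞`-valued `g`. -/
def nLp {n : ℕ} (p : ℝ) (v : Rn n → ℝ) (g : Rn n → ℝ≥0∞) : ℝ≥0∞ :=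
  (∫⁻ x, g x ^ p * ENNReal.ofReal (v x)) ^ (1/p)

/-- The `L^p(v)` norm of a (nonnegative) real function. -/
def nLpR {n : ℕ} (p : ℝ) (v f : Rn n → ℝ) : ℝ≥0∞ :=
  nLp p v (fun x => ENNReal.ofReal (f x))

/-- The conjugate exponent `q' = q/(q-1)`. -/
def conjExp (q : ℝ) : ℝ := q / (q - 1)

/-- The dual weights `σ_i = w_i^{1-p_i'}`. -/
def dualW {n m : ℕ} (p : Fin m → ℝ) (w : Fin m → Rn n → ℝ) : Fin m → Rn n → ℝ :=
  fun i x => w i x ^ (1 - conjExp (p i))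

/-- The geometric average `exp((1/|Q|)∫_Q log g)`, realized (in the extended sense)
as `inf_{r>0} ((1/|Q|)∫_Q g^r)^{1/r}`. -/
def expLogAvg {n : ℕ} (Q : Set (Rn n)) (g : Rn n → ℝ) : ℝ≥0∞ :=
  ⨅ (r : ℝ) (_ : 0 < r), ((∫⁻ x in Q, ENNReal.ofReal (g x) ^ r) / volume Q) ^ (1/r)

/-- A sparse family of cubes indexed by `ℤ × J`. -/
def IsSparse {n : ℕ} (J : Type) (Q : ℤ → J → Set (Rn n)) : Prop :=
  (∀ (k : ℤ) (j j' : J), j ≠ j' → Q k j ∩ Q k j' = ∅) ∧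
  (∀ k : ℤ, (⋃ j, Q (k+1) j) ⊆ ⋃ j, Q k j) ∧
  (∀ (k : ℤ) (j : J), volume ((⋃ j', Q (k+1) j') ∩ Q k j) ≤ volume (Q k j) / 2)

/-- A general dyadic grid. -/
def IsDyadicGrid {n : ℕ} (G : Set (Set (Rn n))) : Prop :=
  (∀ Q ∈ G, ∃ (k : ℤ) (c : Rn n), Q = cube c ((2:ℝ) ^ k)) ∧
  (∀ Q ∈ G, ∀ R ∈ G, Q ∩ R = Q ∨ Q ∩ R = R ∨ Q ∩ R = ∅) ∧
  (∀ k : ℤ,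
    ⋃₀ {Q | Q ∈ G ∧ ∃ c, Q = cube c ((2:ℝ) ^ k)} = Set.univ ∧
    {Q | Q ∈ G ∧ ∃ c, Q = cube c ((2:ℝ) ^ k)}.Pairwise fun Q R => Q ∩ R = ∅)

/-
The Carleson condition controls every finite family `F` of dyadic cubes: peeling off a
maximal cube `R ∈ F` (the cubes of `F` not inside `R` are disjoint from it, by nestedness) and
inducting gives `∑_{Q ∈ F} a_Q ≤ A ν(⋃ F)` with `ν = (∏ σᵢ^{p/pᵢ}) dx`. Applied to the cubes whose multilinear
average exceeds `t`, all contained in `{𝓜^d_σ⃗ f > t}`, this compares distribution functions: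
`∑_{avg_Q > t} a_Q ≤ A ν{𝓜^d_σ⃗ f > t}`. Integrating against `p t^{p-1} dt` (the layer cake
formula, on both sides) yields `∑_Q a_Q avg_Q^p ≤ A ∫ (𝓜^d_σ⃗ f)^p dν`.
-/

section DyadicGrid

variable {n : ℕ}

lemma mem_dyadicCube_iff_floor {k : ℤ} {j : Fin n → ℤ} {x : Rn n} :
    x ∈ dyadicCube k j ↔ ∀ i, ⌊x i * 2 ^ k⌋ = j i := by
  have h2 : (0 : ℝ) < 2 ^ k := by positivity
  simp only [dyadicCube, cube, Set.mem_pi, Set.mem_univ, Set.mem_Ico, true_implies]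
  refine forall_congr' fun i => ?_
  rw [Int.floor_eq_iff, ← div_le_iff₀ h2, ← lt_div_iff₀ h2, add_div, zpow_neg, div_eq_mul_inv,
    one_div]

lemma floor_mul_zpow_of_le (r : ℝ) {k' k : ℤ} (hk : k' ≤ k) :
    ⌊r * 2 ^ k'⌋ = ⌊r * 2 ^ k⌋ / 2 ^ (k - k').toNat := by
  have hpow : (2 : ℝ) ^ k = 2 ^ k' * ((2 ^ (k - k').toNat : ℕ) : ℝ) := by
    rw [Nat.cast_pow, Nat.cast_ofNat, ← zpow_natCast, Int.toNat_of_nonneg (by omega),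
      ← zpow_add₀ two_ne_zero, add_sub_cancel]
  rw [hpow, ← mul_assoc]
  exact_mod_cast (Int.mul_natCast_floor_div_cancel (by positivity) _).symm

lemma dyadicCube_subset_of_le {k k' : ℤ} {j j' : Fin n → ℤ} (hk : k' ≤ k)
    (hne : (dyadicCube k j ∩ dyadicCube k' j').Nonempty) : dyadicCube k j ⊆ dyadicCube k' j' := by
  obtain ⟨x, hx, hx'⟩ := hne
  intro y hy
  rw [mem_dyadicCube_iff_floor] at hx hx' hy ⊢
  intro i
  rw [← hx' i, floor_mul_zpow_of_le _ hk, floor_mul_zpow_of_le _ hk, hx, hy]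

lemma IsDyadicCube.subset_or_subset_or_disjoint {Q R : Set (Rn n)} (hQ : IsDyadicCube Q)
    (hR : IsDyadicCube R) : Q ⊆ R ∨ R ⊆ Q ∨ Disjoint Q R := by
  obtain ⟨k, j, rfl⟩ := hQ
  obtain ⟨k', j', rfl⟩ := hR
  rcases Set.disjoint_or_nonempty_inter (dyadicCube k j) (dyadicCube k' j') with h | h
  · exact .inr (.inr h)
  rcases le_total k' k with hk | hk
  · exact .inl (dyadicCube_subset_of_le hk h)
  · exact .inr (.inl (dyadicCube_subset_of_le hk (Set.inter_comm _ _ ▸ h)))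

lemma IsDyadicCube.measurableSet {Q : Set (Rn n)} (hQ : IsDyadicCube Q) : MeasurableSet Q := by
  obtain ⟨k, j, rfl⟩ := hQ
  exact MeasurableSet.univ_pi fun _ => measurableSet_Ico

instance : Countable {Q : Set (Rn n) // IsDyadicCube Q} := by
  have hsurj : Function.Surjective fun q : ℤ × (Fin n → ℤ) =>
      (⟨dyadicCube q.1 q.2, q.1, q.2, rfl⟩ : {Q : Set (Rn n) // IsDyadicCube Q}) := by
    rintro ⟨Q, k, j, rfl⟩
    exact ⟨(k, j), rfl⟩
  exact hsurj.countable

end DyadicGrid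

section Carleson

variable {n : ℕ} (ν : Measure (Rn n)) (A : ℝ≥0∞) (a : Set (Rn n) → ℝ≥0∞)

def dyadicSup (c : Set (Rn n) → ℝ≥0∞) (x : Rn n) : ℝ≥0∞ :=
  ⨆ (Q : Set (Rn n)) (_ : IsDyadicCube Q) (_ : x ∈ Q), c Q

lemma le_dyadicSup (c : Set (Rn n) → ℝ≥0∞) {Q : Set (Rn n)} (hQ : IsDyadicCube Q) {x : Rn n}
    (hx : x ∈ Q) : c Q ≤ dyadicSup c x :=
  le_iSup₂_of_le Q hQ (le_iSup_of_le hx le_rfl)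

lemma measurable_dyadicSup (c : Set (Rn n) → ℝ≥0∞) : Measurable (dyadicSup c) := by
  have h : dyadicSup c = fun x => ⨆ Q : {Q : Set (Rn n) // IsDyadicCube Q},
      Q.1.indicator (fun _ => c Q.1) x := by
    ext x
    classical
    simp [dyadicSup, iSup_subtype, Set.indicator_apply, iSup_eq_if]
  rw [h]
  exact Measurable.iSup fun Q => measurable_const.indicator Q.2.measurableSet

lemma sum_le_tsum_dyadic_subset {R : Set (Rn n)} (G : Finset {Q : Set (Rn n) // IsDyadicCube Q})
    (hG : ∀ Q ∈ G, Q.1 ⊆ R) :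
    ∑ Q ∈ G, a Q.1 ≤ ∑' Q : {Q : Set (Rn n) // IsDyadicCube Q ∧ Q ⊆ R}, a Q.1 := by
  rw [← Finset.tsum_subtype]
  exact ENNReal.tsum_comp_le_tsum_of_injective
    (f := fun Q : G => (⟨Q.1.1, Q.1.2, hG _ Q.2⟩ : {Q : Set (Rn n) // IsDyadicCube Q ∧ Q ⊆ R}))
    (fun Q Q' h => Subtype.ext (Subtype.ext (Subtype.mk.inj h))) (fun Q => a Q.1)

variable {ν A a}

lemma sum_le_mul_measure_biUnion_of_carleson
    (hCar : ∀ R, IsDyadicCube R →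
      ∑' Q : {Q : Set (Rn n) // IsDyadicCube Q ∧ Q ⊆ R}, a Q.1 ≤ A * ν R)
    (F : Finset {Q : Set (Rn n) // IsDyadicCube Q}) :
    ∑ Q ∈ F, a Q.1 ≤ A * ν (⋃ Q ∈ F, Q.1) := by
  classical
  induction F using Finset.strongInduction with | H F ih => ?_
  rcases F.eq_empty_or_nonempty with rfl | hF
  · simp
  obtain ⟨R, hRmax⟩ := F.exists_maximal hF
  have hRF : R ∈ F := hRmax.1
  set H := F.filter fun Q => ¬ Q ≤ R
  have hHF : H ⊂ F := Finset.filter_ssubset.2 ⟨R, hRF, not_not.2 le_rfl⟩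
  have hdisj : Disjoint R.1 (⋃ Q ∈ H, Q.1) := by
    refine Set.disjoint_iUnion₂_right.2 fun Q hQ => ?_
    obtain ⟨hQF, hQR⟩ := Finset.mem_filter.1 hQ
    rcases R.2.subset_or_subset_or_disjoint Q.2 with h | h | h
    · exact absurd (hRmax.2 hQF h) hQR
    · exact absurd h hQR
    · exact h
  calc ∑ Q ∈ F, a Q.1
      = ∑ Q ∈ F.filter (· ≤ R), a Q.1 + ∑ Q ∈ H, a Q.1 :=
        (Finset.sum_filter_add_sum_filter_not _ _ _).symm
    _ ≤ A * ν R.1 + A * ν (⋃ Q ∈ H, Q.1) :=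
        add_le_add ((sum_le_tsum_dyadic_subset a _ fun Q hQ => (Finset.mem_filter.1 hQ).2).trans
          (hCar R.1 R.2)) (ih H hHF)
    _ = A * ν (R.1 ∪ ⋃ Q ∈ H, Q.1) := by
        rw [measure_union hdisj (Finset.measurableSet_biUnion _ fun Q _ => Q.2.measurableSet),
          mul_add]
    _ ≤ A * ν (⋃ Q ∈ F, Q.1) := by
        gcongr
        exact Set.union_subset (Set.subset_biUnion_of_mem hRF)
          (Set.biUnion_subset_biUnion_left hHF.subset)

lemma tsum_ite_lt_le_mul_measure_lt_dyadicSup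
    (hCar : ∀ R, IsDyadicCube R →
      ∑' Q : {Q : Set (Rn n) // IsDyadicCube Q ∧ Q ⊆ R}, a Q.1 ≤ A * ν R)
    (c : Set (Rn n) → ℝ≥0∞) (s : ℝ≥0∞) :
    ∑' Q : {Q : Set (Rn n) // IsDyadicCube Q}, (if s < c Q.1 then a Q.1 else 0) ≤
      A * ν {x | s < dyadicSup c x} := by
  classical
  rw [ENNReal.tsum_eq_iSup_sum]
  refine iSup_le fun F => ?_
  rw [← Finset.sum_filter]
  have hsub : ⋃ Q ∈ F.filter (s < c ·.1), Q.1 ⊆ {x | s < dyadicSup c x} := by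
    simp only [Set.iUnion_subset_iff, Finset.mem_filter]
    exact fun Q hQ x hx => hQ.2.trans_le (le_dyadicSup c Q.2 hx)
  exact (sum_le_mul_measure_biUnion_of_carleson hCar _).trans (by gcongr)

end Carleson

section LayerCake

open Set Filter Topology

variable {p : ℝ}

lemma lintegral_Ioo_mul_rpow_sub_one (hp : 0 < p) {b : ℝ} (hb : 0 ≤ b) :
    ∫⁻ t in Ioo 0 b, ENNReal.ofReal (p * t ^ (p - 1)) = ENNReal.ofReal b ^ p := by
  have hint : IntervalIntegrable (fun t : ℝ => p * t ^ (p - 1)) volume 0 b :=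
    (intervalIntegral.intervalIntegrable_rpow' (by linarith)).const_mul p
  rw [← ofReal_integral_eq_lintegral_ofReal
      ((intervalIntegrable_iff_integrableOn_Ioo_of_le hb).1 hint)
      ((ae_restrict_iff' measurableSet_Ioo).2 (.of_forall fun t ht =>
        mul_nonneg hp.le (Real.rpow_nonneg ht.1.le _))),
    ← integral_Ioc_eq_integral_Ioo, ← intervalIntegral.integral_of_le hb,
    intervalIntegral.integral_const_mul, integral_rpow (.inl (by linarith)),
    sub_add_cancel, Real.zero_rpow hp.ne', sub_zero, mul_div_cancel₀ _ hp.ne',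
    ENNReal.ofReal_rpow_of_nonneg hb hp.le]

lemma rpow_eq_lintegral_indicator (hp : 0 < p) (c : ℝ≥0∞) :
    c ^ p = ∫⁻ t in Ioi 0,
      {t : ℝ | ENNReal.ofReal t < c}.indicator (fun t => ENNReal.ofReal (p * t ^ (p - 1))) t := by
  have hmeas : MeasurableSet {t : ℝ | ENNReal.ofReal t < c} :=
    measurableSet_lt ENNReal.measurable_ofReal measurable_const
  rw [lintegral_indicator hmeas, Measure.restrict_restrict hmeas]
  rcases eq_or_ne c ⊤ with rfl | hc
  · simp only [ENNReal.ofReal_lt_top, ofPred_true, univ_inter, ENNReal.top_rpow_of_pos hp]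
    have hlim : Tendsto (fun b : ℝ => ENNReal.ofReal b ^ p) atTop (𝓝 ⊤) := by
      simpa only [Function.comp_def, ENNReal.top_rpow_of_pos hp] using
        ((ENNReal.continuous_rpow_const (y := p)).tendsto ⊤).comp ENNReal.tendsto_ofReal_atTop
    refine (top_unique (le_of_tendsto hlim ((eventually_ge_atTop 0).mono fun b hb => ?_))).symm
    rw [← lintegral_Ioo_mul_rpow_sub_one hp hb]
    exact lintegral_mono_set Ioo_subset_Ioi_self
  · have hset : {t : ℝ | ENNReal.ofReal t < c} ∩ Ioi 0 = Ioo 0 c.toReal := by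
      ext t
      simp only [mem_inter_iff, mem_ofPred_eq, mem_Ioi, mem_Ioo]
      exact ⟨fun h => ⟨h.2, (ENNReal.ofReal_lt_iff_lt_toReal h.2.le hc).1 h.1⟩,
        fun h => ⟨(ENNReal.ofReal_lt_iff_lt_toReal h.1.le hc).2 h.2, h.1⟩⟩
    rw [hset, lintegral_Ioo_mul_rpow_sub_one hp ENNReal.toReal_nonneg, ENNReal.ofReal_toReal hc]

lemma lintegral_rpow_eq_lintegral_meas_lt_mul_ennreal {α : Type*} [MeasurableSpace α]
    (μ : Measure α) [SFinite μ] {g : α → ℝ≥0∞} (hg : Measurable g) (hp : 0 < p) :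
    ∫⁻ x, g x ^ p ∂μ =
      ∫⁻ t in Ioi 0, μ {x | ENNReal.ofReal t < g x} * ENNReal.ofReal (p * t ^ (p - 1)) := by
  have hjoint : Measurable (Function.uncurry fun x (t : ℝ) =>
      {t : ℝ | ENNReal.ofReal t < g x}.indicator (fun t => ENNReal.ofReal (p * t ^ (p - 1))) t) :=
    (ENNReal.measurable_ofReal.comp ((measurable_snd.pow_const _).const_mul p)).indicator
      (measurableSet_lt (ENNReal.measurable_ofReal.comp measurable_snd) (hg.comp measurable_fst))
  simp_rw [rpow_eq_lintegral_indicator hp]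
  rw [lintegral_lintegral_swap hjoint.aemeasurable]
  refine lintegral_congr fun t => ?_
  rw [mul_comm, ← lintegral_indicator_const (measurableSet_lt measurable_const hg)]
  rfl

lemma tsum_mul_rpow_eq_lintegral {ι : Type*} [Countable ι] (a c : ι → ℝ≥0∞) (hp : 0 < p) :
    ∑' i, a i * c i ^ p = ∫⁻ t in Ioi 0,
      (∑' i, if ENNReal.ofReal t < c i then a i else 0) * ENNReal.ofReal (p * t ^ (p - 1)) := by
  have hmeas (i : ι) : Measurable
      ({t : ℝ | ENNReal.ofReal t < c i}.indicator fun t => ENNReal.ofReal (p * t ^ (p - 1))) :=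
    (ENNReal.measurable_ofReal.comp ((measurable_id.pow_const _).const_mul p)).indicator
      (measurableSet_lt ENNReal.measurable_ofReal measurable_const)
  simp_rw [rpow_eq_lintegral_indicator hp, ← lintegral_const_mul _ (hmeas _)]
  rw [← lintegral_tsum fun i => ((hmeas i).const_mul _).aemeasurable]
  refine lintegral_congr fun t => ?_
  rw [← ENNReal.tsum_mul_right]
  refine tsum_congr fun i => ?_
  by_cases h : ENNReal.ofReal t < c i <;> simp [h]

end LayerCake

theorem stmt0_general {n m : ℕ} (p : Fin m → ℝ) (pp : ℝ) (hpp1 : 1 < pp)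
    (σ : Fin m → Rn n → ℝ) (hσm : ∀ i, Measurable (σ i))
    (A : ℝ≥0∞) (a : Set (Rn n) → ℝ≥0∞)
    (hCarleson : ∀ R : Set (Rn n), IsDyadicCube R →
      (∑' Q : {Q : Set (Rn n) // IsDyadicCube Q ∧ Q ⊆ R}, a Q.1) ≤
        A * setInt R fun x => ∏ i, σ i x ^ (pp / p i))
    (f : Fin m → Rn n → ℝ) :
    (∑' Q : {Q : Set (Rn n) // IsDyadicCube Q},
        a Q.1 * (∏ i, wAvg Q.1 (σ i) (f i)) ^ pp) ^ (1 / pp) ≤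
      A ^ (1 / pp) * nLp pp (fun x => ∏ i, σ i x ^ (pp / p i)) (Mdw σ f) := by
  set w : Rn n → ℝ≥0∞ := fun x => ENNReal.ofReal (∏ i, σ i x ^ (pp / p i))
  have hw : Measurable w :=
    (Finset.measurable_prod _ fun i _ => (hσm i).pow_const _).ennreal_ofReal
  have hCar (R : Set (Rn n)) (hR : IsDyadicCube R) :
      ∑' Q : {Q : Set (Rn n) // IsDyadicCube Q ∧ Q ⊆ R}, a Q.1 ≤
        A * volume.withDensity w R := by
    rw [withDensity_apply _ hR.measurableSet]
    exact hCarleson R hR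
  have hpp : 0 < pp := by linarith
  have hM : Measurable (Mdw σ f) := measurable_dyadicSup _
  have hsum : ∑' Q : {Q : Set (Rn n) // IsDyadicCube Q},
        a Q.1 * (∏ i, wAvg Q.1 (σ i) (f i)) ^ pp ≤
      ∫⁻ x, Mdw σ f x ^ pp ∂(A • volume.withDensity w) := by
    rw [tsum_mul_rpow_eq_lintegral _ _ hpp,
      lintegral_rpow_eq_lintegral_meas_lt_mul_ennreal _ hM hpp]
    gcongr with t
    exact tsum_ite_lt_le_mul_measure_lt_dyadicSup hCar _ _
  rw [lintegral_smul_measure, lintegral_withDensity_eq_lintegral_mul _ hw (hM.pow_const pp)]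
    at hsum
  calc _ ≤ (A * ∫⁻ x, w x * Mdw σ f x ^ pp) ^ (1 / pp) :=
        ENNReal.rpow_le_rpow hsum (by positivity)
    _ = _ := by
        simp_rw [ENNReal.mul_rpow_of_nonneg _ _ (one_div_nonneg.2 hpp.le), nLp, mul_comm (w _)]
        rfl

/-- Multilinear Carleson embedding: first inequality of Lemma 3.1. -/
theorem stmt0 {n m : ℕ} (hm : 0 < m) (p : Fin m → ℝ) (pp : ℝ)
    (hp : ∀ i, 1 < p i) (hpp : 1 / pp = ∑ i, 1 / p i) (hpp1 : 1 < pp)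
    (σ : Fin m → Rn n → ℝ) (hσ0 : ∀ i x, 0 ≤ σ i x) (hσm : ∀ i, Measurable (σ i))
    (hσloc : ∀ i, LocallyIntegrable (σ i) volume)
    (A : ℝ≥0∞) (a : Set (Rn n) → ℝ≥0∞)
    (hCarleson : ∀ R : Set (Rn n), IsDyadicCube R →
      (∑' Q : {Q : Set (Rn n) // IsDyadicCube Q ∧ Q ⊆ R}, a Q.1) ≤
        A * setInt R fun x => ∏ i, σ i x ^ (pp / p i))
    (f : Fin m → Rn n → ℝ) (hf0 : ∀ i x, 0 ≤ f i x) (hfm : ∀ i, Measurable (f i))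
    (hfLp : ∀ i, (∫⁻ x, ENNReal.ofReal (f i x) ^ p i * ENNReal.ofReal (σ i x)) < ∞) :
    (∑' Q : {Q : Set (Rn n) // IsDyadicCube Q},
        a Q.1 * (∏ i, wAvg Q.1 (σ i) (f i)) ^ pp) ^ (1 / pp) ≤
      A ^ (1 / pp) * nLp pp (fun x => ∏ i, σ i x ^ (pp / p i)) (Mdw σ f) :=
  stmt0_general p pp hpp1 σ hσm A a hCarleson f
end
end

section
/- Let $\sigma$ be a weight on $\mathbb{R}^n$ and define the dyadic logarithmic maximal function $M_0\sigma(x)=\sup_{Q\ni x,\,Q\in\mathscr{D}}\exp\big(\frac{1}{|Q|}\int_Q\log\sigma\big)$. Then $\|M_0\sigma\|_{L^1(\mathbb{R}^n)}\le e\,\|\sigma\|_{L^1(\mathbb{R}^n)}$ for every $\sigma\in L^1(\mathbb{R}^n)$. -/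
open MeasureTheory ENNReal

noncomputable section

/-!
Taking `r = 1/p` in the infimum that defines the geometric mean gives the pointwise bound
`M₀σ ≤ (M^d σ^{1/p})^p`, where `M^d` is the dyadic maximal operator. A stopping-time argument
(select the first generation at which a dyadic average exceeds `s`) gives the weak-type estimate
`s |{M^d g > s}| ≤ ∫_{M^d g > s} g`, which by the layer-cake formula and Hölder yields Doob's
inequality `‖M^d g‖_p ≤ p' ‖g‖_p`. Hence `‖M₀σ‖₁ ≤ (p')^p ‖σ‖₁` for every `p > 1`, and
`(p')^p = (p/(p-1))^p → e` as `p → ∞`.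
-/

open Set Filter Topology Function

section LayerCake

variable {α : Type*} [MeasurableSpace α] {μ : Measure α}

lemma mul_measure_iUnion_le_setLIntegral {ι : Type*} [Countable ι] {S : ι → Set α}
    (hS : ∀ i, MeasurableSet (S i)) (hd : Pairwise (Disjoint on S)) {g : α → ℝ≥0∞} {s : ℝ≥0∞}
    (h : ∀ i, s * μ (S i) ≤ ∫⁻ x in S i, g x ∂μ) :
    s * μ (⋃ i, S i) ≤ ∫⁻ x in ⋃ i, S i, g x ∂μ := by
  rw [measure_iUnion hd hS, lintegral_iUnion hS hd, ← ENNReal.tsum_mul_left]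
  exact ENNReal.tsum_le_tsum h

lemma lintegral_Ioo_ofReal_mul_rpow_sub_one {q : ℝ} (hq : 0 < q) {b : ℝ} (hb : 0 ≤ b) :
    ∫⁻ t in Ioo 0 b, ENNReal.ofReal (q * t ^ (q - 1)) = ENNReal.ofReal (b ^ q) := by
  have hint : IntegrableOn (fun t : ℝ => q * t ^ (q - 1)) (Ioc 0 b) :=
    (intervalIntegrable_iff_integrableOn_Ioc_of_le hb).1
      ((intervalIntegral.intervalIntegrable_rpow' (by linarith)).const_mul q)
  have hpos : 0 ≤ᵐ[volume.restrict (Ioc 0 b)] fun t : ℝ => q * t ^ (q - 1) := by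
    filter_upwards [ae_restrict_mem measurableSet_Ioc] with t ht
    have : 0 < t := ht.1
    positivity
  rw [setLIntegral_congr Ioo_ae_eq_Ioc, ← ofReal_integral_eq_lintegral_ofReal hint hpos,
    ← intervalIntegral.integral_of_le hb, intervalIntegral.integral_const_mul,
    integral_rpow (Or.inl (by linarith)), sub_add_cancel, Real.zero_rpow hq.ne']
  congr 1
  field_simp
  ring

lemma lintegral_Ioi_inter_ofReal_lt {q : ℝ} (hq : 0 < q) (a : ℝ≥0∞) :
    ∫⁻ t in Ioi 0 ∩ {t | ENNReal.ofReal t < a}, ENNReal.ofReal (q * t ^ (q - 1)) = a ^ q := by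
  rcases eq_or_ne a ∞ with rfl | ha
  · simp only [ofReal_lt_top, ofPred_true, inter_univ, top_rpow_of_pos hq]
    refine ENNReal.eq_top_of_forall_nnreal_le fun r => ?_
    obtain ⟨N, hN⟩ := (((tendsto_rpow_atTop hq).comp
      tendsto_natCast_atTop_atTop).eventually_ge_atTop (r : ℝ)).exists
    calc (r : ℝ≥0∞) ≤ ENNReal.ofReal ((N : ℝ) ^ q) := by
          rw [← ofReal_coe_nnreal]; exact ofReal_le_ofReal hN
      _ = ∫⁻ t in Ioo 0 (N : ℝ), ENNReal.ofReal (q * t ^ (q - 1)) :=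
          (lintegral_Ioo_ofReal_mul_rpow_sub_one hq N.cast_nonneg).symm
      _ ≤ _ := lintegral_mono_set Ioo_subset_Ioi_self
  · have hset : Ioi 0 ∩ {t | ENNReal.ofReal t < a} = Ioo 0 a.toReal := by
      ext t
      simp only [mem_inter_iff, mem_Ioi, mem_ofPred_eq, mem_Ioo, and_congr_right_iff]
      exact fun ht => ENNReal.ofReal_lt_iff_lt_toReal ht.le ha
    rw [hset, lintegral_Ioo_ofReal_mul_rpow_sub_one hq toReal_nonneg,
      ← ENNReal.ofReal_rpow_of_nonneg toReal_nonneg hq.le, ofReal_toReal ha]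

lemma lintegral_Ioi_mul_setLIntegral_lt [SFinite μ] {c : ℝ → ℝ≥0∞} {F h : α → ℝ≥0∞}
    (hc : Measurable c) (hF : Measurable F) (hh : Measurable h) :
    ∫⁻ t in Ioi 0, c t * ∫⁻ x in {x | ENNReal.ofReal t < F x}, h x ∂μ =
      ∫⁻ x, h x * (∫⁻ t in Ioi 0 ∩ {t | ENNReal.ofReal t < F x}, c t) ∂μ := by
  set S := {p : ℝ × α | ENNReal.ofReal p.1 < F p.2}
  have hS : MeasurableSet S :=
    measurableSet_lt (ENNReal.measurable_ofReal.comp measurable_fst) (hF.comp measurable_snd)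
  have hSx (x : α) : MeasurableSet {t : ℝ | ENNReal.ofReal t < F x} :=
    measurableSet_lt ENNReal.measurable_ofReal measurable_const
  have hSt (t : ℝ) : MeasurableSet {x | ENNReal.ofReal t < F x} :=
    measurableSet_lt measurable_const hF
  have key := lintegral_lintegral_swap (μ := volume.restrict (Ioi (0 : ℝ))) (ν := μ)
    (f := fun t x => S.indicator (fun p => c p.1 * h p.2) (t, x))
    (((hc.comp measurable_fst).mul (hh.comp measurable_snd)).indicator hS).aemeasurable
  refine (lintegral_congr fun t => ?_).trans (key.trans (lintegral_congr fun x => ?_))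
  · rw [← lintegral_indicator (hSt t), ← lintegral_const_mul _ (hh.indicator (hSt t))]
    congr 1 with x
    by_cases hx : ENNReal.ofReal t < F x <;> simp [S, indicator, hx]
  · rw [inter_comm, ← Measure.restrict_restrict (hSx x), ← lintegral_indicator (hSx x),
      ← lintegral_const_mul _ (hc.indicator (hSx x))]
    congr 1 with t
    by_cases ht : ENNReal.ofReal t < F x <;> simp [S, indicator, ht, mul_comm]

lemma lintegral_rpow_eq_lintegral_ofReal_mul_meas_lt [SFinite μ] {F : α → ℝ≥0∞}
    (hF : Measurable F) {p : ℝ} (hp : 0 < p) :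
    ∫⁻ x, F x ^ p ∂μ =
      ∫⁻ t in Ioi 0, ENNReal.ofReal (p * t ^ (p - 1)) * μ {x | ENNReal.ofReal t < F x} := by
  have hc : Measurable fun t : ℝ => ENNReal.ofReal (p * t ^ (p - 1)) := by fun_prop
  simpa [lintegral_Ioi_inter_ofReal_lt hp] using
    (lintegral_Ioi_mul_setLIntegral_lt (μ := μ) (h := fun _ => 1) hc hF measurable_const).symm

theorem lintegral_rpow_le_of_mul_meas_lt_le [SFinite μ] {F G g : α → ℝ≥0∞}
    (hF : Measurable F) (hG : Measurable G) (hg : Measurable g) {a : ℝ≥0∞} (ha : a ≠ ∞)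
    {p : ℝ} (hp : 1 < p)
    (h : ∀ t : ℝ, 0 < t → ENNReal.ofReal t * μ {x | ENNReal.ofReal t < F x} ≤
      a * ∫⁻ x in {x | ENNReal.ofReal t < G x}, g x ∂μ) :
    ∫⁻ x, F x ^ p ∂μ ≤ a * ENNReal.ofReal (p / (p - 1)) * ∫⁻ x, g x * G x ^ (p - 1) ∂μ := by
  have hp1 : 0 < p - 1 := by linarith
  set c : ℝ → ℝ≥0∞ := fun t => ENNReal.ofReal ((p - 1) * t ^ (p - 1 - 1))
  have hc : Measurable c := by fun_prop
  have hsplit (t : ℝ) (ht : 0 < t) : ENNReal.ofReal (p * t ^ (p - 1)) =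
      ENNReal.ofReal (p / (p - 1)) * c t * ENNReal.ofReal t := by
    rw [← ENNReal.ofReal_mul (by positivity), ← ENNReal.ofReal_mul (by positivity)]
    congr 1
    have hpow : t ^ (p - 1) = t ^ (p - 1 - 1) * t := by
      rw [← Real.rpow_add_one ht.ne', sub_add_cancel]
    rw [hpow]
    generalize t ^ (p - 1 - 1) = u
    field_simp
  calc ∫⁻ x, F x ^ p ∂μ
      = ∫⁻ t in Ioi 0, ENNReal.ofReal (p / (p - 1)) * c t *
          (ENNReal.ofReal t * μ {x | ENNReal.ofReal t < F x}) := by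
        rw [lintegral_rpow_eq_lintegral_ofReal_mul_meas_lt hF (by linarith)]
        refine setLIntegral_congr_fun measurableSet_Ioi fun t ht => ?_
        rw [hsplit t ht, mul_assoc]
    _ ≤ ∫⁻ t in Ioi 0, ENNReal.ofReal (p / (p - 1)) * c t *
          (a * ∫⁻ x in {x | ENNReal.ofReal t < G x}, g x ∂μ) :=
        setLIntegral_mono' measurableSet_Ioi fun t ht => mul_le_mul_right (h t ht) _
    _ = a * ENNReal.ofReal (p / (p - 1)) *
          ∫⁻ t in Ioi 0, c t * ∫⁻ x in {x | ENNReal.ofReal t < G x}, g x ∂μ := by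
        rw [← lintegral_const_mul' _ _ (by finiteness)]
        congr 1 with t
        ring
    _ = a * ENNReal.ofReal (p / (p - 1)) * ∫⁻ x, g x * G x ^ (p - 1) ∂μ := by
        rw [lintegral_Ioi_mul_setLIntegral_lt hc hG hg]
        simp only [c, lintegral_Ioi_inter_ofReal_lt hp1]

lemma ENNReal.le_rpow_mul_of_le_mul_rpow {A c I : ℝ≥0∞} {p : ℝ} (hp : 1 < p) (hA : A ≠ ∞)
    (h : A ≤ c * I ^ (1 / p) * A ^ (1 - 1 / p)) : A ≤ c ^ p * I := by
  have hp0 : 0 < p := by linarith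
  rcases eq_or_ne A 0 with rfl | hA0
  · exact zero_le
  have hAq0 : A ^ (1 - 1 / p) ≠ 0 := (ENNReal.rpow_pos (pos_iff_ne_zero.2 hA0) hA).ne'
  have hAqt : A ^ (1 - 1 / p) ≠ ∞ := ENNReal.rpow_ne_top_of_nonneg (by
    rw [sub_nonneg, div_le_one hp0]; exact hp.le) hA
  have hroot : A ^ (1 / p) ≤ c * I ^ (1 / p) := by
    rw [← ENNReal.mul_le_mul_iff_left hAq0 hAqt, ← ENNReal.rpow_add _ _ hA0 hA, add_sub_cancel,
      ENNReal.rpow_one]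
    exact h
  calc A = (A ^ (1 / p)) ^ p := by
        rw [← ENNReal.rpow_mul, one_div_mul_cancel hp0.ne', ENNReal.rpow_one]
    _ ≤ (c * I ^ (1 / p)) ^ p := by gcongr
    _ = c ^ p * I := by
      rw [ENNReal.mul_rpow_of_nonneg _ _ hp0.le, ← ENNReal.rpow_mul, one_div_mul_cancel hp0.ne',
        ENNReal.rpow_one]

theorem lintegral_rpow_le_of_mul_meas_lt_le_setLIntegral [SFinite μ] {F g : α → ℝ≥0∞}
    (hF : Measurable F) (hg : Measurable g) {p : ℝ} (hp : 1 < p)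
    (hFp : ∫⁻ x, F x ^ p ∂μ ≠ ∞)
    (h : ∀ t : ℝ, 0 < t → ENNReal.ofReal t * μ {x | ENNReal.ofReal t < F x} ≤
      ∫⁻ x in {x | ENNReal.ofReal t < F x}, g x ∂μ) :
    ∫⁻ x, F x ^ p ∂μ ≤ ENNReal.ofReal ((p / (p - 1)) ^ p) * ∫⁻ x, g x ^ p ∂μ := by
  have hp0 : 0 < p := by linarith
  have hp1 : p - 1 ≠ 0 := by linarith
  have hpq : p.HolderConjugate (p / (p - 1)) := Real.HolderConjugate.conjExponent hp
  rw [← ENNReal.ofReal_rpow_of_nonneg (by positivity) hp0.le]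
  refine ENNReal.le_rpow_mul_of_le_mul_rpow hp hFp ?_
  calc ∫⁻ x, F x ^ p ∂μ ≤ ENNReal.ofReal (p / (p - 1)) * ∫⁻ x, g x * F x ^ (p - 1) ∂μ := by
        simpa using
          lintegral_rpow_le_of_mul_meas_lt_le hF hF hg one_ne_top hp (by simpa using h)
    _ ≤ ENNReal.ofReal (p / (p - 1)) * ((∫⁻ x, g x ^ p ∂μ) ^ (1 / p) *
          (∫⁻ x, (F x ^ (p - 1)) ^ (p / (p - 1)) ∂μ) ^ (1 / (p / (p - 1)))) := by
        gcongr
        exact ENNReal.lintegral_mul_le_Lp_mul_Lq μ hpq hg.aemeasurable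
          (hF.pow_const _).aemeasurable
    _ = ENNReal.ofReal (p / (p - 1)) * (∫⁻ x, g x ^ p ∂μ) ^ (1 / p) *
          (∫⁻ x, F x ^ p ∂μ) ^ (1 - 1 / p) := by
        have : (p - 1) * (p / (p - 1)) = p := by field_simp
        simp only [← ENNReal.rpow_mul, this, mul_assoc]
        congr 3
        field_simp

end LayerCake

section Dyadic

variable {n : ℕ}

def dyadicIndex (k : ℤ) (x : Rn n) : Fin n → ℤ := fun i => ⌊x i * 2 ^ k⌋

lemma mem_dyadicCube_iff {k : ℤ} {j : Fin n → ℤ} {x : Rn n} :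
    x ∈ dyadicCube k j ↔ dyadicIndex k x = j := by
  have h2 : (0 : ℝ) < 2 ^ k := zpow_pos two_pos k
  have hcoord (i : Fin n) : (j i : ℝ) * 2 ^ (-k) ≤ x i ∧ x i < j i * 2 ^ (-k) + 2 ^ (-k) ↔
      ⌊x i * 2 ^ k⌋ = j i := by
    rw [Int.floor_eq_iff, zpow_neg, ← div_eq_mul_inv, ← one_div, ← add_div, div_le_iff₀ h2,
      lt_div_iff₀ h2]
  simp only [dyadicCube, cube, mem_univ_pi, mem_Ico, hcoord, funext_iff, dyadicIndex]

lemma dyadicIndex_sub_natCast (k : ℤ) (m : ℕ) (x : Rn n) :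
    dyadicIndex (k - m) x = fun i => dyadicIndex k x i / 2 ^ m := by
  ext i
  have h : x i * 2 ^ (k - m) = x i * 2 ^ k / ((2 ^ m : ℕ) : ℝ) := by
    rw [zpow_sub₀ two_ne_zero, mul_div_assoc]
    norm_cast
  rw [dyadicIndex, dyadicIndex, h, Int.floor_div_natCast]
  norm_cast

lemma dyadicIndex_eq_of_le {k k' : ℤ} (hk : k' ≤ k) {x y : Rn n}
    (h : dyadicIndex k x = dyadicIndex k y) : dyadicIndex k' x = dyadicIndex k' y := by
  obtain ⟨m, rfl⟩ : ∃ m : ℕ, k' = k - m := ⟨(k - k').toNat, by omega⟩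
  rw [dyadicIndex_sub_natCast, dyadicIndex_sub_natCast, h]

lemma measurable_dyadicIndex (k : ℤ) : Measurable (dyadicIndex (n := n) k) :=
  measurable_pi_lambda _ fun i => ((measurable_pi_apply i).mul_const _).floor

lemma measurableSet_dyadicCube (k : ℤ) (j : Fin n → ℤ) : MeasurableSet (dyadicCube k j) :=
  MeasurableSet.univ_pi fun _ => measurableSet_Ico

lemma volume_dyadicCube_ne_zero (k : ℤ) (j : Fin n → ℤ) : volume (dyadicCube k j) ≠ 0 := by
  simp [dyadicCube, cube, volume_pi_pi, Real.volume_Ico, (zpow_pos (two_pos (α := ℝ)) k).not_ge]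

lemma volume_dyadicCube_ne_top (k : ℤ) (j : Fin n → ℤ) : volume (dyadicCube k j) ≠ ∞ := by
  simp [dyadicCube, cube, volume_pi_pi, Real.volume_Ico]

def dyadicCubeAt (k : ℤ) (x : Rn n) : Set (Rn n) := dyadicCube k (dyadicIndex k x)

lemma mem_dyadicCubeAt (k : ℤ) (x : Rn n) : x ∈ dyadicCubeAt k x := mem_dyadicCube_iff.2 rfl

lemma dyadicCubeAt_eq_of_le {k k' : ℤ} (hk : k' ≤ k) {x y : Rn n}
    (h : dyadicIndex k x = dyadicIndex k y) : dyadicCubeAt k' x = dyadicCubeAt k' y := by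
  rw [dyadicCubeAt, dyadicCubeAt, dyadicIndex_eq_of_le hk h]

lemma measurable_setLAverage_dyadicCubeAt (g : Rn n → ℝ≥0∞) (k : ℤ) :
    Measurable fun x => ⨍⁻ y in dyadicCubeAt k x, g y ∂volume :=
  (measurable_of_countable fun j => ⨍⁻ y in dyadicCube k j, g y ∂volume).comp
    (measurable_dyadicIndex k)

/-- Restricting to generations `≥ K` guarantees that a first heavy generation exists
(`exists_isFirstHeavyGeneration`) without any a priori bound on the size of heavy cubes. -/
def dyadicMaximalFrom (K : ℤ) (g : Rn n → ℝ≥0∞) (x : Rn n) : ℝ≥0∞ :=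
  ⨆ (k : ℤ) (_ : K ≤ k), ⨍⁻ y in dyadicCubeAt k x, g y ∂volume

def dyadicMaximal (g : Rn n → ℝ≥0∞) (x : Rn n) : ℝ≥0∞ :=
  ⨆ k : ℤ, ⨍⁻ y in dyadicCubeAt k x, g y ∂volume

lemma measurable_dyadicMaximal (g : Rn n → ℝ≥0∞) : Measurable (dyadicMaximal g) :=
  .iSup fun k => measurable_setLAverage_dyadicCubeAt g k

lemma setLAverage_dyadicCubeAt_le_dyadicMaximalFrom (g : Rn n → ℝ≥0∞) {K k : ℤ} (hK : K ≤ k)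
    (x : Rn n) : ⨍⁻ y in dyadicCubeAt k x, g y ∂volume ≤ dyadicMaximalFrom K g x :=
  le_iSup₂ (f := fun k (_ : K ≤ k) => ⨍⁻ y in dyadicCubeAt k x, g y ∂volume) k hK

lemma setLAverage_dyadicCubeAt_le_dyadicMaximal (g : Rn n → ℝ≥0∞) (k : ℤ) (x : Rn n) :
    ⨍⁻ y in dyadicCubeAt k x, g y ∂volume ≤ dyadicMaximal g x :=
  le_iSup (fun k => ⨍⁻ y in dyadicCubeAt k x, g y ∂volume) k

lemma setOf_lt_dyadicMaximal_eq_iUnion (g : Rn n → ℝ≥0∞) (s : ℝ≥0∞) :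
    {x | s < dyadicMaximal g x} = ⋃ K, {x | s < dyadicMaximalFrom K g x} := by
  ext x
  simp only [dyadicMaximal, dyadicMaximalFrom, mem_ofPred_eq, mem_iUnion, lt_iSup_iff]
  exact ⟨fun ⟨k, hk⟩ => ⟨k, k, le_rfl, hk⟩, fun ⟨_, k, _, hk⟩ => ⟨k, hk⟩⟩

lemma antitone_setOf_lt_dyadicMaximalFrom (g : Rn n → ℝ≥0∞) (s : ℝ≥0∞) :
    Antitone fun K => {x | s < dyadicMaximalFrom K g x} := by
  intro K K' hK x hx
  simp only [dyadicMaximalFrom, mem_ofPred_eq, lt_iSup_iff] at hx ⊢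
  obtain ⟨k, hk, hs⟩ := hx
  exact ⟨k, hK.trans hk, hs⟩

def IsFirstHeavyGeneration (g : Rn n → ℝ≥0∞) (s : ℝ≥0∞) (K k : ℤ) (x : Rn n) : Prop :=
  K ≤ k ∧ s < ⨍⁻ y in dyadicCubeAt k x, g y ∂volume ∧
    ∀ k', K ≤ k' → k' < k → ⨍⁻ y in dyadicCubeAt k' x, g y ∂volume ≤ s

variable {g : Rn n → ℝ≥0∞} {s : ℝ≥0∞} {K : ℤ}

lemma IsFirstHeavyGeneration.eq {k k' : ℤ} {x : Rn n} (h : IsFirstHeavyGeneration g s K k x)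
    (h' : IsFirstHeavyGeneration g s K k' x) : k = k' := by
  by_contra hne
  rcases lt_or_gt_of_ne hne with hlt | hlt
  · exact (h'.2.2 k h.1 hlt).not_gt h.2.1
  · exact (h.2.2 k' h'.1 hlt).not_gt h'.2.1

lemma exists_isFirstHeavyGeneration {x : Rn n} (h : s < dyadicMaximalFrom K g x) :
    ∃ k, IsFirstHeavyGeneration g s K k x := by
  simp only [dyadicMaximalFrom, lt_iSup_iff] at h
  obtain ⟨k₁, hK, hk₁⟩ := h
  classical
  obtain ⟨k, ⟨hKk, hk⟩, hmin⟩ := Int.exists_least_of_bdd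
    (P := fun k => K ≤ k ∧ s < ⨍⁻ y in dyadicCubeAt k x, g y ∂volume) ⟨K, fun _ hz => hz.1⟩
    ⟨k₁, hK, hk₁⟩
  exact ⟨k, hKk, hk, fun k' hK' hlt => not_lt.1 fun hs => (hmin k' ⟨hK', hs⟩).not_gt hlt⟩

lemma isFirstHeavyGeneration_congr {k : ℤ} {x y : Rn n}
    (h : dyadicIndex k x = dyadicIndex k y) :
    IsFirstHeavyGeneration g s K k x ↔ IsFirstHeavyGeneration g s K k y := by
  unfold IsFirstHeavyGeneration
  refine and_congr_right fun _ => and_congr (by rw [dyadicCubeAt_eq_of_le le_rfl h])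
    (forall_congr' fun k' => imp_congr_right fun _ => imp_congr_right fun hlt => ?_)
  rw [dyadicCubeAt_eq_of_le hlt.le h]

lemma inter_setOf_isFirstHeavyGeneration (k : ℤ) (j : Fin n → ℤ) :
    dyadicCube k j ∩ {x | IsFirstHeavyGeneration g s K k x} = ∅ ∨
      (dyadicCube k j ∩ {x | IsFirstHeavyGeneration g s K k x} = dyadicCube k j ∧
        s < ⨍⁻ y in dyadicCube k j, g y ∂volume) := by
  refine (eq_empty_or_nonempty _).imp_right fun ⟨x₀, hx₀, hP⟩ => ⟨?_, ?_⟩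
  · refine inter_eq_left.2 fun y hy => (isFirstHeavyGeneration_congr ?_).1 hP
    rw [mem_dyadicCube_iff.1 hx₀, mem_dyadicCube_iff.1 hy]
  · simpa [dyadicCubeAt, mem_dyadicCube_iff.1 hx₀] using hP.2.1

lemma mul_volume_lt_dyadicMaximalFrom_le (g : Rn n → ℝ≥0∞) (s : ℝ≥0∞) (K : ℤ) :
    s * volume {x | s < dyadicMaximalFrom K g x} ≤
      ∫⁻ x in {x | s < dyadicMaximalFrom K g x}, g x := by
  set S : ℤ × (Fin n → ℤ) → Set (Rn n) :=
    fun q => dyadicCube q.1 q.2 ∩ {x | IsFirstHeavyGeneration g s K q.1 x}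
  have hU : {x | s < dyadicMaximalFrom K g x} = ⋃ q, S q := by
    ext x
    refine ⟨fun hx => ?_, fun hx => ?_⟩
    · obtain ⟨k, hk⟩ := exists_isFirstHeavyGeneration hx
      exact mem_iUnion.2 ⟨(k, dyadicIndex k x), mem_dyadicCubeAt k x, hk⟩
    · obtain ⟨q, -, hq⟩ := mem_iUnion.1 hx
      exact hq.2.1.trans_le (setLAverage_dyadicCubeAt_le_dyadicMaximalFrom g hq.1 x)
  have hS (q : ℤ × (Fin n → ℤ)) : MeasurableSet (S q) := by
    rcases inter_setOf_isFirstHeavyGeneration (g := g) (s := s) (K := K) q.1 q.2 with h | ⟨h, -⟩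
    · simp only [S, h, MeasurableSet.empty]
    · simpa only [S, h] using measurableSet_dyadicCube q.1 q.2
  have hd : Pairwise (Disjoint on S) := by
    intro q q' hne
    refine disjoint_left.2 fun x ⟨hxq, hq⟩ ⟨hxq', hq'⟩ => hne ?_
    have hk : q.1 = q'.1 := hq.eq hq'
    refine Prod.ext hk ?_
    rw [← mem_dyadicCube_iff.1 hxq, ← mem_dyadicCube_iff.1 hxq', hk]
  rw [hU]
  refine mul_measure_iUnion_le_setLIntegral hS hd fun q => ?_
  rcases inter_setOf_isFirstHeavyGeneration (g := g) (s := s) (K := K) q.1 q.2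
    with h | ⟨h, hheavy⟩
  · simp only [S, h, measure_empty, mul_zero, zero_le]
  · simp only [S, h]
    exact ENNReal.mul_le_of_le_div (by rw [← setLAverage_eq]; exact hheavy.le)

theorem mul_volume_lt_dyadicMaximal_le (g : Rn n → ℝ≥0∞) (s : ℝ≥0∞) :
    s * volume {x | s < dyadicMaximal g x} ≤ ∫⁻ x in {x | s < dyadicMaximal g x}, g x := by
  rw [setOf_lt_dyadicMaximal_eq_iUnion, (antitone_setOf_lt_dyadicMaximalFrom g s).measure_iUnion,
    ENNReal.mul_iSup]
  exact iSup_le fun K => (mul_volume_lt_dyadicMaximalFrom_le g s K).trans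
    (lintegral_mono_set (subset_iUnion (fun K => {x | s < dyadicMaximalFrom K g x}) K))

lemma dyadicMaximal_le_add {g h : Rn n → ℝ≥0∞} {L : ℝ≥0∞} (hgh : ∀ y, g y ≤ h y + L)
    (x : Rn n) : dyadicMaximal g x ≤ dyadicMaximal h x + L := by
  refine iSup_le fun k => ?_
  have h0 : volume (dyadicCubeAt k x) ≠ 0 := volume_dyadicCube_ne_zero _ _
  have htop : volume (dyadicCubeAt k x) ≠ ∞ := volume_dyadicCube_ne_top _ _
  calc ⨍⁻ y in dyadicCubeAt k x, g y ∂volume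
      ≤ ⨍⁻ y in dyadicCubeAt k x, (h y + L) ∂volume := by
        simp only [setLAverage_eq]
        gcongr with y
        exact hgh y
    _ = ⨍⁻ y in dyadicCubeAt k x, h y ∂volume + L := by
        rw [setLAverage_eq, setLAverage_eq, lintegral_add_right _ measurable_const,
          setLIntegral_const, ENNReal.add_div, ENNReal.mul_div_cancel_right h0 htop]
    _ ≤ dyadicMaximal h x + L := by
        gcongr
        exact setLAverage_dyadicCubeAt_le_dyadicMaximal h k x

-- Only the part of `g` above `t / 2` can push `M^d g` above `t`.
lemma ofReal_mul_volume_lt_dyadicMaximal_le_two_mul {g : Rn n → ℝ≥0∞} (hg : Measurable g) (t : ℝ) :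
    ENNReal.ofReal t * volume {x | ENNReal.ofReal t < dyadicMaximal g x} ≤
      2 * ∫⁻ x in {x | ENNReal.ofReal t < 2 * g x}, g x := by
  set L := ENNReal.ofReal (t / 2)
  set E := {x | ENNReal.ofReal t < 2 * g x}
  have hE : MeasurableSet E := measurableSet_lt measurable_const (hg.const_mul 2)
  have htL : ENNReal.ofReal t = 2 * L := by
    rw [← ENNReal.ofReal_ofNat 2, ← ENNReal.ofReal_mul zero_le_two]
    ring_nf
  have hsplit (y : Rn n) : g y ≤ E.indicator g y + L := by
    by_cases hy : y ∈ E
    · simp [hy]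
    · rw [indicator_of_notMem hy, zero_add]
      simp only [E, mem_ofPred_eq, not_lt, htL] at hy
      exact (ENNReal.mul_le_mul_iff_right two_ne_zero ofNat_ne_top).1 hy
  have hsub : {x | ENNReal.ofReal t < dyadicMaximal g x} ⊆
      {x | L < dyadicMaximal (E.indicator g) x} := by
    intro x hx
    by_contra hle
    simp only [mem_ofPred_eq, not_lt] at hx hle
    refine hx.not_ge ((dyadicMaximal_le_add hsplit x).trans ?_)
    rw [htL, two_mul]
    gcongr
  calc ENNReal.ofReal t * volume {x | ENNReal.ofReal t < dyadicMaximal g x}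
      ≤ 2 * (L * volume {x | L < dyadicMaximal (E.indicator g) x}) := by
        nth_rewrite 1 [htL]
        rw [mul_assoc]
        exact mul_le_mul_right (mul_le_mul_right (measure_mono hsub) _) _
    _ ≤ 2 * ∫⁻ x, E.indicator g x := by
        gcongr
        exact (mul_volume_lt_dyadicMaximal_le _ L).trans (setLIntegral_le_lintegral _ _)
    _ = 2 * ∫⁻ x in E, g x := by rw [lintegral_indicator hE]

lemma lintegral_dyadicMaximal_rpow_ne_top {g : Rn n → ℝ≥0∞} (hg : Measurable g) {p : ℝ}
    (hp : 1 < p) (hgp : ∫⁻ x, g x ^ p ≠ ∞) : ∫⁻ x, dyadicMaximal g x ^ p ≠ ∞ := by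
  have hp1 : 0 ≤ p - 1 := by linarith
  have hbound := lintegral_rpow_le_of_mul_meas_lt_le (measurable_dyadicMaximal g)
    (hg.const_mul 2) hg ofNat_ne_top hp
    fun t _ => ofReal_mul_volume_lt_dyadicMaximal_le_two_mul hg t
  have hpow (x : Rn n) : g x * (2 * g x) ^ (p - 1) = 2 ^ (p - 1) * g x ^ p := by
    rw [ENNReal.mul_rpow_of_nonneg _ _ hp1, show p = 1 + (p - 1) by ring,
      ENNReal.rpow_add_of_nonneg _ _ zero_le_one hp1, ENNReal.rpow_one, add_sub_cancel_left]
    ring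
  refine ne_top_of_le_ne_top ?_ hbound
  rw [lintegral_congr hpow, lintegral_const_mul' _ _ (by finiteness)]
  finiteness

theorem lintegral_dyadicMaximal_rpow_le {g : Rn n → ℝ≥0∞} (hg : Measurable g) {p : ℝ}
    (hp : 1 < p) :
    ∫⁻ x, dyadicMaximal g x ^ p ≤ ENNReal.ofReal ((p / (p - 1)) ^ p) * ∫⁻ x, g x ^ p := by
  have hp1 : 0 < p - 1 := by linarith
  by_cases hgp : ∫⁻ x, g x ^ p = ∞
  · rw [hgp, ENNReal.mul_top (ENNReal.ofReal_pos.2 (by positivity)).ne']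
    exact le_top
  exact lintegral_rpow_le_of_mul_meas_lt_le_setLIntegral (measurable_dyadicMaximal g) hg hp
    (lintegral_dyadicMaximal_rpow_ne_top hg hp hgp) fun t _ => mul_volume_lt_dyadicMaximal_le g _

end Dyadic

lemma tendsto_div_sub_one_rpow_self_atTop :
    Tendsto (fun p : ℝ => (p / (p - 1)) ^ p) atTop (𝓝 (Real.exp 1)) := by
  have hq : Tendsto (fun q : ℝ => (1 + 1 / q) ^ q * (1 + 1 / q)) atTop (𝓝 (Real.exp 1)) := by
    simpa using (Real.tendsto_one_add_div_rpow_exp 1).mul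
      ((tendsto_const_nhds (x := (1 : ℝ))).add tendsto_inv_atTop_zero)
  refine (hq.comp (tendsto_atTop_add_const_right atTop (-1) tendsto_id)).congr' ?_
  filter_upwards [eventually_gt_atTop 1] with p hp
  have hp1 : p - 1 ≠ 0 := by linarith
  have hbase : 1 + 1 / (p - 1) = p / (p - 1) := by field_simp; ring
  simp only [comp_apply, id, ← sub_eq_add_neg, hbase]
  rw [← Real.rpow_add_one (by positivity), sub_add_cancel]

lemma iSup_expLogAvg_le_dyadicMaximal_rpow {n : ℕ} (σ : Rn n → ℝ) {p : ℝ} (hp : 0 < p)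
    (x : Rn n) :
    ⨆ (Q : Set (Rn n)) (_ : IsDyadicCube Q) (_ : x ∈ Q), expLogAvg Q σ ≤
      dyadicMaximal (fun y => ENNReal.ofReal (σ y) ^ (1 / p)) x ^ p := by
  refine iSup₂_le fun Q ⟨k, j, hQ⟩ => iSup_le fun hx => ?_
  have hQx : Q = dyadicCubeAt k x := by rw [hQ, dyadicCubeAt, mem_dyadicCube_iff.1 (hQ ▸ hx)]
  calc expLogAvg Q σ
      ≤ ((∫⁻ y in Q, ENNReal.ofReal (σ y) ^ (1 / p)) / volume Q) ^ (1 / (1 / p)) :=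
        iInf₂_le (1 / p) (by positivity)
    _ ≤ _ := by
        rw [one_div_one_div, ← setLAverage_eq, hQx]
        gcongr
        exact setLAverage_dyadicCubeAt_le_dyadicMaximal _ k x

theorem stmt10_general {n : ℕ} (σ : Rn n → ℝ) (hσm : Measurable σ) :
    (∫⁻ x, ⨆ (Q : Set (Rn n)) (_ : IsDyadicCube Q) (_ : x ∈ Q), expLogAvg Q σ) ≤
      ENNReal.ofReal (Real.exp 1) * ∫⁻ x, ENNReal.ofReal (σ x) := by
  have hbound (p : ℝ) (hp : 1 < p) :
      (∫⁻ x, ⨆ (Q : Set (Rn n)) (_ : IsDyadicCube Q) (_ : x ∈ Q), expLogAvg Q σ) ≤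
        ENNReal.ofReal ((p / (p - 1)) ^ p) * ∫⁻ x, ENNReal.ofReal (σ x) := by
    have hp0 : 0 < p := by linarith
    set g := fun y => ENNReal.ofReal (σ y) ^ (1 / p)
    have hgp (y : Rn n) : g y ^ p = ENNReal.ofReal (σ y) := by
      rw [← ENNReal.rpow_mul, one_div_mul_cancel hp0.ne', ENNReal.rpow_one]
    calc _ ≤ ∫⁻ x, dyadicMaximal g x ^ p :=
          lintegral_mono (iSup_expLogAvg_le_dyadicMaximal_rpow σ hp0)
      _ ≤ ENNReal.ofReal ((p / (p - 1)) ^ p) * ∫⁻ x, g x ^ p :=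
          lintegral_dyadicMaximal_rpow_le (hσm.ennreal_ofReal.pow_const _) hp
      _ = _ := by simp only [hgp]
  by_cases hI : ∫⁻ x, ENNReal.ofReal (σ x) = ∞
  · rw [hI, ENNReal.mul_top (by simp [Real.exp_pos])]
    exact le_top
  exact ge_of_tendsto
    (ENNReal.Tendsto.mul_const
      ((ENNReal.continuous_ofReal.tendsto _).comp tendsto_div_sub_one_rpow_self_atTop) (Or.inr hI))
    ((eventually_gt_atTop 1).mono hbound)

/-- `L¹` boundedness of the dyadic logarithmic maximal operator: `‖M₀σ‖₁ ≤ e‖σ‖₁`. -/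
theorem stmt10 {n : ℕ} (σ : Rn n → ℝ) (hσ0 : ∀ x, 0 ≤ σ x) (hσm : Measurable σ)
    (hσ1 : Integrable σ volume) :
    (∫⁻ x, ⨆ (Q : Set (Rn n)) (_ : IsDyadicCube Q) (_ : x ∈ Q), expLogAvg Q σ) ≤
      ENNReal.ofReal (Real.exp 1) * ∫⁻ x, ENNReal.ofReal (σ x) :=
  stmt10_general σ hσm
end
end

section
/- There exist $2^n$ dyadic grids $\mathscr{D}_\alpha$ in $\mathbb{R}^n$ such that for every cube $Q\subset\mathbb{R}^n$ there exist $\alpha$ and a cube $Q_\alpha\in\mathscr{D}_\alpha$ with $Q\subset Q_\alpha$ and $\ell_{Q_\alpha}\le 6\ell_Q$. -/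
open MeasureTheory ENNReal

noncomputable section

/-!
At sidelength `2 ^ k` the one-dimensional grid with parameter `a ∈ ℤ` consists of the intervals
`[j 2 ^ k + s_k, (j + 1) 2 ^ k + s_k)`, `j ∈ ℤ`, with `s_k = a (-2) ^ k / 3`; for `a ∈ {0, 1}`
these are the grids `𝒟_α` of the paper. Since `s_k - s_{k+1} = a (-2) ^ k ∈ 2 ^ k ℤ`, the index of
the cell containing a point at sidelength `2 ^ (k + 1)` is a function of its index at sidelength
`2 ^ k`, so cells, and hence products of cells, are nested or disjoint.

The cell endpoints of the grids `a = 0` and `a = 1` at sidelength `2 ^ k` lie in `2 ^ k ℤ` and in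
`2 ^ k (ℤ ± 1/3)`, so they are at least `2 ^ k / 3` apart and an interval of length
`h ≤ 2 ^ k / 3` avoids the endpoints of one of the two grids. Taking `3 h ≤ 2 ^ k < 6 h` and
choosing the grid coordinate by coordinate puts a cube of sidelength `h` into a cube of one of the
`2 ^ n` product grids.
-/

namespace ShiftedDyadic

def shift (a k : ℤ) : ℝ := a * (-2 : ℝ) ^ k / 3

def index (a k : ℤ) (x : ℝ) : ℤ := ⌊(x - shift a k) / 2 ^ k⌋

lemma neg_two_zpow_eq_or (k : ℤ) : (-2 : ℝ) ^ k = 2 ^ k ∨ (-2 : ℝ) ^ k = -2 ^ k :=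
  (Int.even_or_odd k).imp (fun h => h.neg_zpow 2) (fun h => h.neg_zpow 2)

lemma index_eq_iff {a k j : ℤ} {x : ℝ} :
    index a k x = j ↔ x ∈ Set.Ico (j * 2 ^ k + shift a k) (j * 2 ^ k + shift a k + 2 ^ k) := by
  have h2 : (0 : ℝ) < 2 ^ k := zpow_pos two_pos k
  rw [index, Int.floor_eq_iff, le_div_iff₀ h2, div_lt_iff₀ h2, Set.mem_Ico]
  constructor <;> rintro ⟨h1, h2⟩ <;> constructor <;> linarith

lemma exists_index_succ_eq_comp (a k : ℤ) : ∃ g : ℤ → ℤ, index a (k + 1) = g ∘ index a k := by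
  obtain ⟨ε, hε⟩ : ∃ ε : ℤ, (-2 : ℝ) ^ k = ε * 2 ^ k := by
    rcases neg_two_zpow_eq_or k with h | h
    · exact ⟨1, by simp [h]⟩
    · exact ⟨-1, by simp [h]⟩
  refine ⟨fun j => (j + a * ε) / (2 : ℕ), funext fun x => ?_⟩
  have hx : (x - shift a (k + 1)) / 2 ^ (k + 1) =
      ((x - shift a k) / 2 ^ k + ((a * ε : ℤ) : ℝ)) / (2 : ℕ) := by
    rw [shift, shift, zpow_add_one₀ two_ne_zero, zpow_add_one₀ (by norm_num : (-2 : ℝ) ≠ 0), hε]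
    field_simp
    push_cast
    ring
  simp only [index, Function.comp_apply, hx, Int.floor_div_natCast, Int.floor_add_intCast]

lemma exists_index_eq_comp (a : ℤ) {k l : ℤ} (hkl : k ≤ l) :
    ∃ g : ℤ → ℤ, index a l = g ∘ index a k := by
  induction l, hkl using Int.leInduction with
  | base => exact ⟨id, rfl⟩
  | succ l _ ih =>
    obtain ⟨g, hg⟩ := ih
    obtain ⟨g', hg'⟩ := exists_index_succ_eq_comp a l
    exact ⟨g' ∘ g, by rw [hg', hg]; rfl⟩

lemma two_zpow_div_three_le_abs_sub_shift_one (d k : ℤ) :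
    (2 : ℝ) ^ k / 3 ≤ |d * 2 ^ k - shift 1 k| := by
  obtain ⟨e, he, hshift⟩ : ∃ e : ℤ, e ≠ 0 ∧ d * 2 ^ k - shift 1 k = e * 2 ^ k / 3 := by
    rcases neg_two_zpow_eq_or k with h | h
    · exact ⟨3 * d - 1, by omega, by rw [shift, h]; push_cast; ring⟩
    · exact ⟨3 * d + 1, by omega, by rw [shift, h]; push_cast; ring⟩
  have he' : (1 : ℝ) ≤ |(e : ℝ)| := by exact_mod_cast Int.one_le_abs he
  rw [hshift, abs_div, abs_mul, abs_of_pos (zpow_pos two_pos k : (0 : ℝ) < 2 ^ k),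
    abs_of_pos (three_pos : (0 : ℝ) < 3)]
  calc (2 : ℝ) ^ k / 3 = 1 * 2 ^ k / 3 := by ring
    _ ≤ |(e : ℝ)| * 2 ^ k / 3 := by gcongr

lemma right_endpoint_mem_of_index_ne {a k : ℤ} {x y h : ℝ} (hy : y ∈ Set.Ico x (x + h))
    (hne : index a k y ≠ index a k x) :
    (index a k x + 1) * 2 ^ k + shift a k ∈ Set.Ioo x (x + h) := by
  obtain ⟨hcx, hxc⟩ := index_eq_iff.mp (rfl : index a k x = index a k x)
  have hey : (index a k x + 1) * 2 ^ k + shift a k ≤ y := by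
    by_contra! hlt
    exact hne (index_eq_iff.mpr ⟨by linarith [hy.1], by linarith⟩)
  constructor <;> linarith [hy.2]

lemma exists_Ico_subset_index_preimage {k : ℤ} {h : ℝ} (hk : 3 * h ≤ 2 ^ k) (x : ℝ) :
    ∃ b : Fin 2, Set.Ico x (x + h) ⊆ index b k ⁻¹' {index b k x} := by
  by_contra! hcon
  obtain ⟨y₀, hy₀, hne₀⟩ := Set.not_subset.mp (hcon 0)
  obtain ⟨y₁, hy₁, hne₁⟩ := Set.not_subset.mp (hcon 1)
  have he₀ := right_endpoint_mem_of_index_ne hy₀ hne₀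
  have he₁ := right_endpoint_mem_of_index_ne hy₁ hne₁
  have hshift : shift 0 k = 0 := by simp [shift]
  simp only [Fin.val_zero, Fin.val_one, Nat.cast_zero, Nat.cast_one, hshift, Set.mem_Ioo]
    at he₀ he₁
  have hfar := two_zpow_div_three_le_abs_sub_shift_one (index 0 k x - index 1 k x) k
  push_cast [le_abs] at hfar
  rcases hfar with hfar | hfar <;> linarith [he₀.1, he₀.2, he₁.1, he₁.2]

lemma preimage_inter_preimage_comp_eq_left_or_eq_empty {X Y Z : Type*} (f : X → Y) (g : Y → Z)
    (y : Y) (z : Z) :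
    f ⁻¹' {y} ∩ (g ∘ f) ⁻¹' {z} = f ⁻¹' {y} ∨ f ⁻¹' {y} ∩ (g ∘ f) ⁻¹' {z} = ∅ := by
  by_cases hyz : g y = z
  · exact Or.inl (Set.inter_eq_left.mpr fun x hx => by simp_all)
  · right
    ext x
    simp only [Set.mem_inter_iff, Set.mem_preimage, Set.mem_singleton_iff, Function.comp_apply,
      Set.mem_empty_iff_false, iff_false, not_and]
    rintro rfl
    exact hyz

lemma eq_of_cube_subset_cube {n : ℕ} {c c' : Rn n} {h : ℝ} (hh : 0 < h)
    (hsub : cube c h ⊆ cube c' h) : c = c' := by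
  rcases Set.pi_subset_pi_iff.mp hsub with hsub | hempty
  · funext i
    have := (Set.Ico_subset_Ico_iff (by linarith)).mp (hsub i trivial)
    linarith [this.1, this.2]
  · exact absurd hempty (Set.nonempty_iff_ne_empty.mp ⟨c, fun i _ => ⟨le_rfl, by linarith⟩⟩)

lemma cube_inter_cube_eq_empty {n : ℕ} {G : Set (Set (Rn n))}
    (hG : ∀ Q ∈ G, ∀ R ∈ G, Q ∩ R = Q ∨ Q ∩ R = R ∨ Q ∩ R = ∅) {c c' : Rn n} {h : ℝ}
    (hh : 0 < h) (hc : cube c h ∈ G) (hc' : cube c' h ∈ G) (hne : cube c h ≠ cube c' h) :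
    cube c h ∩ cube c' h = ∅ := by
  rcases hG _ hc _ hc' with hQ | hR | hempty
  · exact (hne (by rw [eq_of_cube_subset_cube hh (Set.inter_eq_left.mp hQ)])).elim
  · exact (hne (by rw [eq_of_cube_subset_cube hh (Set.inter_eq_right.mp hR)])).elim
  · exact hempty

section Grid

variable {n : ℕ}

def cubeIndex (α : Fin n → ℤ) (k : ℤ) (x : Rn n) : Fin n → ℤ := fun i => index (α i) k (x i)

def corner (α : Fin n → ℤ) (k : ℤ) (j : Fin n → ℤ) : Rn n := fun i => j i * 2 ^ k + shift (α i) k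

def shiftedGrid (α : Fin n → ℤ) : Set (Set (Rn n)) :=
  {Q | ∃ k j, Q = cube (corner α k j) (2 ^ k)}

lemma cube_corner_eq_preimage (α : Fin n → ℤ) (k : ℤ) (j : Fin n → ℤ) :
    cube (corner α k j) (2 ^ k) = cubeIndex α k ⁻¹' {j} := by
  ext x
  simp only [cube, corner, Set.mem_pi, Set.mem_univ, true_implies, Set.mem_preimage,
    Set.mem_singleton_iff, funext_iff, cubeIndex, index_eq_iff]

lemma exists_cubeIndex_eq_comp (α : Fin n → ℤ) {k l : ℤ} (hkl : k ≤ l) :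
    ∃ g : (Fin n → ℤ) → Fin n → ℤ, cubeIndex α l = g ∘ cubeIndex α k := by
  choose g hg using fun i => exists_index_eq_comp (α i) hkl
  exact ⟨fun j i => g i (j i), funext fun x => funext fun i => congrFun (hg i) (x i)⟩

lemma shiftedGrid_nested (α : Fin n → ℤ) :
    ∀ Q ∈ shiftedGrid α, ∀ R ∈ shiftedGrid α, Q ∩ R = Q ∨ Q ∩ R = R ∨ Q ∩ R = ∅ := by
  rintro _ ⟨k, j, rfl⟩ _ ⟨l, j', rfl⟩
  simp only [cube_corner_eq_preimage]
  rcases le_total k l with hkl | hlk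
  · obtain ⟨g, hg⟩ := exists_cubeIndex_eq_comp α hkl
    rw [hg]
    exact (preimage_inter_preimage_comp_eq_left_or_eq_empty _ g j j').imp_right Or.inr
  · obtain ⟨g, hg⟩ := exists_cubeIndex_eq_comp α hlk
    rw [hg, Set.inter_comm]
    exact Or.inr (preimage_inter_preimage_comp_eq_left_or_eq_empty _ g j' j)

theorem isDyadicGrid_shiftedGrid (α : Fin n → ℤ) : IsDyadicGrid (shiftedGrid α) := by
  refine ⟨?_, shiftedGrid_nested α, fun k => ⟨?_, ?_⟩⟩
  · rintro _ ⟨k, j, rfl⟩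
    exact ⟨k, _, rfl⟩
  · refine Set.eq_univ_of_forall fun x => ⟨_, ⟨⟨k, cubeIndex α k x, rfl⟩, _, rfl⟩, ?_⟩
    rw [cube_corner_eq_preimage]
    rfl
  · rintro _ ⟨hQ, c, rfl⟩ _ ⟨hR, c', rfl⟩ hne
    exact cube_inter_cube_eq_empty (shiftedGrid_nested α) (zpow_pos two_pos k) hQ hR hne

lemma exists_cube_subset_shiftedGrid {k : ℤ} {h : ℝ} (hk : 3 * h ≤ 2 ^ k) (c : Rn n) :
    ∃ b : Fin n → Fin 2, ∃ c' : Rn n,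
      cube c' (2 ^ k) ∈ shiftedGrid (fun i => b i) ∧ cube c h ⊆ cube c' (2 ^ k) := by
  choose b hb using fun i => exists_Ico_subset_index_preimage hk (c i)
  refine ⟨b, _, ⟨k, cubeIndex (fun i => b i) k c, rfl⟩, ?_⟩
  rw [cube_corner_eq_preimage]
  exact fun x hx => funext fun i => hb i (hx i trivial)

end Grid

end ShiftedDyadic

open ShiftedDyadic in
/-- There are `2ⁿ` dyadic grids such that every cube is contained in a cube of one of the
grids of at most `6` times its sidelength (Lemma 2.1). -/
theorem stmt12 (n : ℕ) :
    ∃ D : Fin (2 ^ n) → Set (Set (Rn n)),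
      (∀ α, IsDyadicGrid (D α)) ∧
      ∀ (c : Rn n) (h : ℝ), 0 < h →
        ∃ (α : Fin (2 ^ n)) (c' : Rn n) (h' : ℝ),
          cube c' h' ∈ D α ∧ cube c h ⊆ cube c' h' ∧ h' ≤ 6 * h := by
  refine ⟨fun α => shiftedGrid fun i => finFunctionFinEquiv.symm α i,
    fun α => isDyadicGrid_shiftedGrid _, fun c h hh => ?_⟩
  obtain ⟨m, hm, hm'⟩ := exists_mem_Ico_zpow (by positivity : 0 < 3 * h) one_lt_two
  have hk : (2 : ℝ) ^ (m + 1) ≤ 6 * h := by rw [zpow_add_one₀ two_ne_zero]; linarith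
  obtain ⟨b, c', hc', hsub⟩ := exists_cube_subset_shiftedGrid hm'.le c
  exact ⟨finFunctionFinEquiv b, c', _, by simpa using hc', hsub, hk⟩
end
end
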